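/- (Proposition 4.7 combinatorial content) Let $G$ be a group with normalized 3-cocycle $\omega$, $H \le G$ a subgroup. On the free vector space with basis $\{A(h_1,g_1,s,h_2,g_2) : h_1,h_2 \in H,\ g_1,g_2,s \in G,\ h_1 g_1 s = s h_2 g_2\}$, define $A(h_2'',g_2,t,h_3,g_3)\cdot A(h_1,g_1,s,h_2',g_2) = \delta_{h_2'=h_2''}\,[\omega(s,t,h_3 g_3)\,\overline{\omega}(s,h_2' g_2,t)\,\omega(h_1 g_1,s,t)]\,A(h_1,g_1,st,h_3,g_3)$ (zero if the triples $(h_2',g_2)$, $(h_2'',g_2)$ or the $g$'s mismatch). Then this multiplication is associative. -/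

import Mathlib

/-!
The scalar in the product of basis elements is the transgression
`θ_x(s, t) = ω(s, t, x) ω(s, t x t⁻¹, t)⁻¹ ω(s t x t⁻¹ s⁻¹, s, t)` of `ω`. On basis elements
associativity is its twisted 2-cocycle identity
`θ_x(b, a) θ_x(c, b a) = θ_{a x a⁻¹}(c, b) θ_x(c b, a)`, the alternating product of four
instances of the 3-cocycle identity; bilinearity extends it to the whole algebra.
-/

/-- Basis elements `A(h₁,g₁,s,h₂,g₂)` of the affine annular algebra of a
Bisch–Haagerup subfactor: `h₁, h₂ ∈ H` and `h₁g₁s = s h₂g₂`. -/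
structure BHBasis (G : Type*) [Group G] (H : Subgroup G) where
  h1 : G
  g1 : G
  s : G
  h2 : G
  g2 : G
  mh1 : h1 ∈ H
  mh2 : h2 ∈ H
  rel : h1 * g1 * s = s * (h2 * g2)

/-- Product of basis elements: `A(h₂'',g₂,t,h₃,g₃) ⬝ A(h₁,g₁,s,h₂',g₂) =
δ_{h₂'=h₂''} ω(s,t,h₃g₃) ω̄(s,h₂'g₂,t) ω(h₁g₁,s,t) A(h₁,g₁,st,h₃,g₃)`.
Here `p` is the left factor and `q` the right factor. -/
noncomputable def bhMulBasis {G : Type*} [Group G] [DecidableEq G] {H : Subgroup G}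
    (ω : G → G → G → Circle) (p q : BHBasis G H) : BHBasis G H →₀ ℂ :=
  if h : q.h2 = p.h1 ∧ q.g2 = p.g1 then
    Finsupp.single
      ({ h1 := q.h1, g1 := q.g1, s := q.s * p.s, h2 := p.h2, g2 := p.g2
         mh1 := q.mh1, mh2 := p.mh2
         rel := by
          obtain ⟨hh, hg⟩ := h
          have r1 := q.rel
          have r2 := p.rel
          rw [hh, hg] at r1
          calc q.h1 * q.g1 * (q.s * p.s) = (q.h1 * q.g1 * q.s) * p.s := by group
            _ = (q.s * (p.h1 * p.g1)) * p.s := by rw [r1]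
            _ = q.s * (p.h1 * p.g1 * p.s) := by group
            _ = q.s * (p.s * (p.h2 * p.g2)) := by rw [r2]
            _ = q.s * p.s * (p.h2 * p.g2) := by group } : BHBasis G H)
      ((ω q.s p.s (p.h2 * p.g2) * (ω q.s (q.h2 * q.g2) p.s)⁻¹ *
          ω (q.h1 * q.g1) q.s p.s : Circle) : ℂ)
  else 0

/-- The bilinear extension of the basis product (first argument is the left factor). -/
noncomputable def bhMul {G : Type*} [Group G] [DecidableEq G] {H : Subgroup G}
    (ω : G → G → G → Circle) (x y : BHBasis G H →₀ ℂ) : BHBasis G H →₀ ℂ :=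
  Finsupp.sum x fun p a => Finsupp.sum y fun q b => (a * b) • bhMulBasis ω p q

section Transgression

variable {G M : Type*} [Group G] [CommGroup M]

/-- `transgression ω z s y t x` is `θ_x(s, t)`, with the conjugates `y = t x t⁻¹` and
`z = s y s⁻¹` passed as arguments. -/
def transgression (ω : G → G → G → M) (z s y t x : G) : M :=
  ω s t x * (ω s y t)⁻¹ * ω z s t

theorem transgression_mul_transgression (ω : G → G → G → M)
    (hω : ∀ g1 g2 g3 g4 : G,
      ω g1 g2 g3 * ω g1 (g2 * g3) g4 * ω g2 g3 g4 =
        ω (g1 * g2) g3 g4 * ω g1 g2 (g3 * g4))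
    {a b c x y z w : G} (hyx : y * a = a * x) (hzy : z * b = b * y) (hwz : w * c = c * z) :
    transgression ω z b y a x * transgression ω w c z (b * a) x =
      transgression ω w c z b y * transgression ω w (c * b) y a x := by
  have hω' g1 g2 g3 g4 := congrArg Additive.ofMul (hω g1 g2 g3 g4)
  simp only [ofMul_mul] at hω'
  have A := hω' c b a x
  have B := hω' c b y a
  have C := hω' c z b a
  have D := hω' w c b a
  rw [← hzy, hyx] at B
  rw [← hwz] at C
  apply Additive.ofMul.injective
  simp only [transgression, ofMul_mul, ofMul_inv]
  linear_combination (norm := abel) A - B + C - D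

end Transgression

section Multiplication

variable {G : Type*} [Group G] [DecidableEq G] {H : Subgroup G} (ω : G → G → G → Circle)

theorem bhMul_single_single (p q : BHBasis G H) (a b : ℂ) :
    bhMul ω (Finsupp.single p a) (Finsupp.single q b) = (a * b) • bhMulBasis ω p q := by
  simp [bhMul]

@[simp]
theorem bhMul_zero_left (y : BHBasis G H →₀ ℂ) : bhMul ω 0 y = 0 := by
  simp [bhMul]

@[simp]
theorem bhMul_zero_right (x : BHBasis G H →₀ ℂ) : bhMul ω x 0 = 0 := by
  simp [bhMul]

theorem bhMul_add_left (x₁ x₂ y : BHBasis G H →₀ ℂ) :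
    bhMul ω (x₁ + x₂) y = bhMul ω x₁ y + bhMul ω x₂ y :=
  Finsupp.sum_add_index' (fun _ => by simp) fun _ _ _ => by
    simp only [add_mul, add_smul, Finsupp.sum_add]

theorem bhMul_add_right (x y₁ y₂ : BHBasis G H →₀ ℂ) :
    bhMul ω x (y₁ + y₂) = bhMul ω x y₁ + bhMul ω x y₂ := by
  rw [bhMul, bhMul, bhMul, ← Finsupp.sum_add]
  refine Finsupp.sum_congr fun p _ => Finsupp.sum_add_index' (fun _ => by simp) fun _ _ _ => ?_
  simp only [mul_add, add_smul]

theorem bhMul_single_assoc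
    (hω : ∀ g1 g2 g3 g4 : G,
      ω g1 g2 g3 * ω g1 (g2 * g3) g4 * ω g2 g3 g4 =
        ω (g1 * g2) g3 g4 * ω g1 g2 (g3 * g4))
    (p q r : BHBasis G H) (a b c : ℂ) :
    bhMul ω (bhMul ω (.single p a) (.single q b)) (.single r c) =
      bhMul ω (.single p a) (bhMul ω (.single q b) (.single r c)) := by
  simp only [bhMul_single_single]
  by_cases hpq : q.h2 = p.h1 ∧ q.g2 = p.g1 <;> by_cases hqr : r.h2 = q.h1 ∧ r.g2 = q.g1
  · simp only [bhMulBasis, hpq, hqr, and_self, dite_true, Finsupp.smul_single', bhMul_single_single]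
    simp only [mul_assoc r.s]
    congr 1
    have hqr_rel : r.h1 * r.g1 * r.s = r.s * (q.h1 * q.g1) := hqr.1 ▸ hqr.2 ▸ r.rel
    have hpq_rel : q.h1 * q.g1 * q.s = q.s * (p.h1 * p.g1) := hpq.1 ▸ hpq.2 ▸ q.rel
    have key := congrArg ((↑) : Circle → ℂ)
      (transgression_mul_transgression ω hω p.rel hpq_rel hqr_rel)
    rw [Circle.coe_mul, Circle.coe_mul] at key
    unfold transgression at key
    linear_combination (a * b * c) * key
  all_goals simp only [bhMulBasis, hpq, hqr, and_self, dite_true, dite_false,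
    Finsupp.smul_single', bhMul_single_single, smul_zero, bhMul_zero_left, bhMul_zero_right]

end Multiplication

theorem stmt_16_general {G : Type*} [Group G] [DecidableEq G] (H : Subgroup G)
    (ω : G → G → G → Circle)
    (hω : ∀ g1 g2 g3 g4 : G,
      ω g1 g2 g3 * ω g1 (g2 * g3) g4 * ω g2 g3 g4 =
        ω (g1 * g2) g3 g4 * ω g1 g2 (g3 * g4)) :
    ∀ x y z : BHBasis G H →₀ ℂ,
      bhMul ω (bhMul ω x y) z = bhMul ω x (bhMul ω y z) := by
  intro x y z
  induction x using Finsupp.induction_linear with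
  | zero => simp
  | add x₁ x₂ h₁ h₂ => rw [bhMul_add_left, bhMul_add_left, bhMul_add_left, h₁, h₂]
  | single p a =>
    induction y using Finsupp.induction_linear with
    | zero => simp
    | add y₁ y₂ h₁ h₂ =>
      rw [bhMul_add_right, bhMul_add_left, bhMul_add_left, bhMul_add_right, h₁, h₂]
    | single q b =>
      induction z using Finsupp.induction_linear with
      | zero => simp
      | add z₁ z₂ h₁ h₂ => rw [bhMul_add_right, bhMul_add_right, bhMul_add_right, h₁, h₂]
      | single r c => exact bhMul_single_assoc ω hω p q r a b c

/-- Proposition 4.7 (combinatorial content): the multiplication of the affine annular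
algebra of the Bisch–Haagerup subfactor is associative. -/
theorem stmt_16 {G : Type*} [Group G] [DecidableEq G] (H : Subgroup G)
    (ω : G → G → G → Circle)
    (hω : ∀ g1 g2 g3 g4 : G,
      ω g1 g2 g3 * ω g1 (g2 * g3) g4 * ω g2 g3 g4 =
        ω (g1 * g2) g3 g4 * ω g1 g2 (g3 * g4))
    (hnorm : ∀ g1 g2 g3 : G, (g1 = 1 ∨ g2 = 1 ∨ g3 = 1) → ω g1 g2 g3 = 1) :
    ∀ x y z : BHBasis G H →₀ ℂ,
      bhMul ω (bhMul ω x y) z = bhMul ω x (bhMul ω y z) :=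
  stmt_16_general H ω hω
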